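/- arXiv:2509.10439 — 4 statements merged into one kernel-verified Lean document; each statement's English description precedes it below -/
import Mathlib

section
/- Let a, b > 0, c ≥ 0, and let (r_k)_{k≥0} and (δ_k)_{k≥0} be nonnegative real sequences satisfying r_{k+1} ≤ (1+a) r_k − b δ_k + c for all k. Then for every K ≥ 1, min_{0 ≤ j ≤ K−1} δ_j ≤ r₀ e^{aK}/(bK) + c/b. -/
/-- Recursion lemma: if nonnegative sequences satisfy `r_{k+1} ≤ (1+a) r_k − b δ_k + c`,
then for every `K ≥ 1`, `min_{0 ≤ j ≤ K−1} δ_j ≤ r₀ e^{aK}/(bK) + c/b`. -/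
theorem recursion_min_bound (a b c : ℝ) (ha : 0 < a) (hb : 0 < b) (hc : 0 ≤ c)
    (r δ : ℕ → ℝ) (hr : ∀ k, 0 ≤ r k) (hδ : ∀ k, 0 ≤ δ k)
    (hrec : ∀ k, r (k + 1) ≤ (1 + a) * r k - b * δ k + c)
    (K : ℕ) (hK : 1 ≤ K) :
    (Finset.range K).inf' (Finset.nonempty_range_iff.mpr (by omega)) δ
      ≤ r 0 * Real.exp (a * K) / (b * K) + c / b := by
  set m := (Finset.range K).inf' (Finset.nonempty_range_iff.mpr (by omega)) δ with hm
  have hmle : ∀ j, j < K → m ≤ δ j := fun j hj =>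
    Finset.inf'_le δ (Finset.mem_range.mpr hj)
  have hbK : (0:ℝ) < b * K := by positivity
  have hexp : (0:ℝ) < Real.exp (a * K) := Real.exp_pos _
  by_cases h : b * m - c ≤ 0
  · have h1 : m ≤ c / b := by
      rw [le_div_iff₀ hb]; nlinarith
    have h2 : 0 ≤ r 0 * Real.exp (a * K) / (b * K) :=
      div_nonneg (mul_nonneg (hr 0) hexp.le) hbK.le
    linarith
  · push_neg at h
    have key : ∀ k, k ≤ K → r k ≤ (1 + a) ^ k * r 0 - k * (b * m - c) := by
      intro k hk
      induction k with
      | zero => simp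
      | succ n ih =>
        have hn : n ≤ K := Nat.le_of_succ_le hk
        have hnK : n < K := hk
        have h1 := hrec n
        have h2 : m ≤ δ n := hmle n hnK
        have h3 : r (n + 1) ≤ (1 + a) * r n - (b * m - c) := by nlinarith
        have h4 := ih hn
        have h5 : (1 + a) * r n ≤ (1 + a) * ((1 + a) ^ n * r 0 - n * (b * m - c)) := by
          apply mul_le_mul_of_nonneg_left h4 (by linarith)
        have h6 : (n:ℝ) ≤ (1 + a) * n := by nlinarith [Nat.cast_nonneg (α := ℝ) n]
        rw [pow_succ]
        push_cast
        nlinarith [mul_nonneg (mul_nonneg ha.le (Nat.cast_nonneg (α := ℝ) n)) h.le]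
    have hK' := key K le_rfl
    have hrK := hr K
    have hpow : (1 + a) ^ K ≤ Real.exp (a * K) := by
      calc (1 + a) ^ K ≤ (Real.exp a) ^ K := by
            apply pow_le_pow_left₀ (by linarith)
            linarith [Real.add_one_le_exp a]
        _ = Real.exp (a * K) := by
            rw [← Real.exp_nat_mul]; ring_nf
    have hKpos : (0:ℝ) < K := by exact_mod_cast hK
    have h7 : (K:ℝ) * (b * m - c) ≤ (1 + a) ^ K * r 0 := by linarith
    have h8 : (1 + a) ^ K * r 0 ≤ Real.exp (a * K) * r 0 := by
      apply mul_le_mul_of_nonneg_right hpow (hr 0)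
    rw [div_add_div _ _ (ne_of_gt hbK) (ne_of_gt hb), le_div_iff₀ (by positivity)]
    nlinarith [mul_le_mul_of_nonneg_right h7 hb.le, mul_le_mul_of_nonneg_right h8 hb.le]
end

section
/- Let f : ℝ^d → ℝ be convex, differentiable, with L-Lipschitz gradient. Suppose M nodes each run SGD from the same point x_r: y_{m,r,0} = x_r and y_{m,r,h+1} = y_{m,r,h} − η g_{m,r,h}, with unbiased stochastic gradients of variance at most σ², independent across nodes. If η ≤ 1/L, then for all h, E[(1/M²) Σ_{m=1}^M Σ_{s=1}^M ‖y_{m,r,h} − y_{s,r,h}‖²] ≤ 2η²σ²h. -/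
/-!
For convex `L`-smooth `f` the gradient is co-coercive, `⟪∇f x - ∇f y, x - y⟫ ≥ ‖∇f x - ∇f y‖² / L`,
so for `0 ≤ η ≤ 1/L` the gradient step `x ↦ x - η ∇f x` is nonexpansive. After one SGD step the
difference of two nodes is this nonexpansive image of their previous difference minus `η` times
the difference of their gradient noises. The noise has vanishing conditional expectation given the
past, hence is orthogonal in `L²` to the rest, and the noises of distinct nodes are uncorrelated, so
each step adds at most `2 η² σ²` to the expected squared distance, which is `0` at the start.
-/

open MeasureTheory
open scoped RealInnerProductSpace

section Smooth

variable {E : Type*} [NormedAddCommGroup E] [InnerProductSpace ℝ E] [CompleteSpace E]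
  {f : E → ℝ} {L η : ℝ}

theorem DifferentiableAt.hasDerivAt_comp_add_smul {x v : E} {t : ℝ}
    (hf : DifferentiableAt ℝ f (x + t • v)) :
    HasDerivAt (fun s : ℝ => f (x + s • v)) ⟪gradient f (x + t • v), v⟫ t := by
  have hline : HasDerivAt (fun s : ℝ => x + s • v) v t := by
    simpa using ((hasDerivAt_id t).smul_const v).const_add x
  exact hf.hasGradientAt.hasFDerivAt.comp_hasDerivAt t hline

theorem ConvexOn.add_inner_gradient_le (hconv : ConvexOn ℝ Set.univ f) {x : E}
    (hf : DifferentiableAt ℝ f x) (y : E) : f x + ⟪gradient f x, y - x⟫ ≤ f y := by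
  have hline : ConvexOn ℝ Set.univ fun s : ℝ => f (x + s • (y - x)) := by
    simpa [Function.comp_def] using hconv.comp_affineMap
      (AffineMap.const ℝ ℝ x + (LinearMap.toSpanSingleton ℝ E (y - x)).toAffineMap)
  have hderiv : HasDerivAt (fun s : ℝ => f (x + s • (y - x))) ⟪gradient f x, y - x⟫ 0 := by
    simpa using
      (show DifferentiableAt ℝ f (x + (0 : ℝ) • (y - x)) by simpa).hasDerivAt_comp_add_smul
  have hslope := hline.le_slope_of_hasDerivAt (Set.mem_univ 0) (Set.mem_univ 1) one_pos hderiv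
  simp only [slope_def_field, one_smul, add_sub_cancel, zero_smul, add_zero, sub_zero,
    div_one] at hslope
  linarith

theorem le_add_inner_gradient_add_norm_sq (hdiff : Differentiable ℝ f)
    (hlip : ∀ x y, ‖gradient f x - gradient f y‖ ≤ L * ‖x - y‖) (x y : E) :
    f y ≤ f x + ⟪gradient f x, y - x⟫ + L / 2 * ‖y - x‖ ^ 2 := by
  set v := y - x
  -- `φ` is antitone on `[0, ∞)` because its derivative is `⟪∇f (x + t v) - ∇f x, v⟫ - L t ‖v‖²`.
  let φ : ℝ → ℝ := fun t => f (x + t • v) - (t * ⟪gradient f x, v⟫ + L / 2 * ‖v‖ ^ 2 * t ^ 2)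
  let φ' : ℝ → ℝ := fun t =>
    ⟪gradient f (x + t • v), v⟫ - (⟪gradient f x, v⟫ + L / 2 * ‖v‖ ^ 2 * (2 * t))
  have hφ : ∀ t, HasDerivAt φ (φ' t) t := fun t => by
    refine (hdiff _).hasDerivAt_comp_add_smul.sub ?_
    convert ((hasDerivAt_id t).mul_const ⟪gradient f x, v⟫).add
      ((hasDerivAt_pow 2 t).const_mul (L / 2 * ‖v‖ ^ 2)) using 1
    · rfl
    · simp
  have hφ'_nonpos : ∀ t ∈ interior (Set.Ici (0 : ℝ)), φ' t ≤ 0 := by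
    intro t ht
    rw [interior_Ici, Set.mem_Ioi] at ht
    have h := (real_inner_le_norm _ _).trans (mul_le_mul_of_nonneg_right
      (hlip (x + t • v) x) (norm_nonneg v))
    rw [add_sub_cancel_left, norm_smul, Real.norm_of_nonneg ht.le, inner_sub_left] at h
    simp only [φ']
    nlinarith
  have hanti : AntitoneOn φ (Set.Ici 0) :=
    antitoneOn_of_hasDerivWithinAt_nonpos (convex_Ici 0)
      (fun t _ => (hφ t).continuousAt.continuousWithinAt)
      (fun t _ => (hφ t).hasDerivWithinAt) hφ'_nonpos
  have := hanti (Set.mem_Ici.2 le_rfl) (Set.mem_Ici.2 zero_le_one) zero_le_one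
  simp only [φ, v, one_smul, add_sub_cancel, zero_smul, add_zero] at this
  linarith

theorem ConvexOn.add_inner_gradient_add_norm_sq_gradient_le (hconv : ConvexOn ℝ Set.univ f)
    (hdiff : Differentiable ℝ f) (hL : 0 < L)
    (hlip : ∀ x y, ‖gradient f x - gradient f y‖ ≤ L * ‖x - y‖) (x y : E) :
    f x + ⟪gradient f x, y - x⟫ + 1 / (2 * L) * ‖gradient f y - gradient f x‖ ^ 2 ≤ f y := by
  set Δ := gradient f y - gradient f x
  -- `z` minimises the quadratic upper bound of `f` at `y`
  set z := y - (1 / L) • Δ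
  have hxz := hconv.add_inner_gradient_le (hdiff x) z
  have hzy := le_add_inner_gradient_add_norm_sq hdiff hlip y z
  have hz_sub_x : z - x = (y - x) - (1 / L) • Δ := by simp only [z]; abel
  have hz_sub_y : z - y = -((1 / L) • Δ) := by simp only [z]; abel
  rw [hz_sub_x, inner_sub_right, real_inner_smul_right] at hxz
  rw [hz_sub_y, inner_neg_right, real_inner_smul_right, norm_neg, norm_smul, Real.norm_eq_abs,
    mul_pow, sq_abs] at hzy
  have hΔ : 1 / L * ⟪gradient f y, Δ⟫ - 1 / L * ⟪gradient f x, Δ⟫ = 1 / L * ‖Δ‖ ^ 2 := by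
    rw [← mul_sub, ← inner_sub_left, real_inner_self_eq_norm_sq]
  have hL' : L ≠ 0 := hL.ne'
  have : 1 / (2 * L) * ‖Δ‖ ^ 2 = 1 / L * ‖Δ‖ ^ 2 - L / 2 * ((1 / L) ^ 2 * ‖Δ‖ ^ 2) := by
    field_simp; ring
  linarith

theorem ConvexOn.inv_mul_norm_sq_gradient_sub_le_inner (hconv : ConvexOn ℝ Set.univ f)
    (hdiff : Differentiable ℝ f) (hL : 0 < L)
    (hlip : ∀ x y, ‖gradient f x - gradient f y‖ ≤ L * ‖x - y‖) (x y : E) :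
    1 / L * ‖gradient f x - gradient f y‖ ^ 2 ≤ ⟪gradient f x - gradient f y, x - y⟫ := by
  have hxy := hconv.add_inner_gradient_add_norm_sq_gradient_le hdiff hL hlip x y
  have hyx := hconv.add_inner_gradient_add_norm_sq_gradient_le hdiff hL hlip y x
  rw [norm_sub_rev] at hyx
  have hinner : ⟪gradient f x, y - x⟫ + ⟪gradient f y, x - y⟫
      = -⟪gradient f x - gradient f y, x - y⟫ := by
    rw [← neg_sub x y, inner_neg_right, inner_sub_left]; ring
  have : 1 / L * ‖gradient f x - gradient f y‖ ^ 2
      = 2 * (1 / (2 * L) * ‖gradient f y - gradient f x‖ ^ 2) := by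
    rw [norm_sub_rev]; field_simp
  linarith

theorem ConvexOn.norm_sub_smul_gradient_sub_le (hconv : ConvexOn ℝ Set.univ f)
    (hdiff : Differentiable ℝ f) (hL : 0 < L)
    (hlip : ∀ x y, ‖gradient f x - gradient f y‖ ≤ L * ‖x - y‖) (hη0 : 0 ≤ η) (hη : η ≤ 1 / L)
    (x y : E) : ‖(x - η • gradient f x) - (y - η • gradient f y)‖ ≤ ‖x - y‖ := by
  have hco := hconv.inv_mul_norm_sq_gradient_sub_le_inner hdiff hL hlip x y
  have hsq : ‖(x - y) - η • (gradient f x - gradient f y)‖ ^ 2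
      = ‖x - y‖ ^ 2 - 2 * η * ⟪gradient f x - gradient f y, x - y⟫
        + η ^ 2 * ‖gradient f x - gradient f y‖ ^ 2 := by
    rw [norm_sub_sq_real, real_inner_smul_right, real_inner_comm, norm_smul, Real.norm_eq_abs,
      mul_pow, sq_abs]; ring
  have hη_co : η * ‖gradient f x - gradient f y‖ ^ 2 ≤ ⟪gradient f x - gradient f y, x - y⟫ :=
    (mul_le_mul_of_nonneg_right hη (sq_nonneg _)).trans hco
  rw [show (x - η • gradient f x) - (y - η • gradient f y)
      = (x - y) - η • (gradient f x - gradient f y) by module]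
  refine (pow_le_pow_iff_left₀ (norm_nonneg _) (norm_nonneg _) two_ne_zero).1 ?_
  rw [hsq]
  nlinarith [mul_nonneg hη0 (sq_nonneg ‖gradient f x - gradient f y‖)]

end Smooth

namespace MeasureTheory

variable {E : Type*} [NormedAddCommGroup E]
  {Ω : Type*} {m mΩ : MeasurableSpace Ω} {μ : Measure Ω} {F G : Ω → E}

theorem MemLp.integrable_norm_sq (hF : MemLp F 2 μ) : Integrable (fun ω => ‖F ω‖ ^ 2) μ :=
  (memLp_two_iff_integrable_sq_norm hF.1).1 hF

variable [InnerProductSpace ℝ E]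

theorem MemLp.integrable_inner (hF : MemLp F 2 μ) (hG : MemLp G 2 μ) :
    Integrable (fun ω => ⟪F ω, G ω⟫) μ :=
  memLp_one_iff_integrable.1 ((innerSL ℝ).memLp_of_bilin 1 hF hG)

theorem integral_norm_sub_sq (hF : MemLp F 2 μ) (hG : MemLp G 2 μ) :
    ∫ ω, ‖F ω - G ω‖ ^ 2 ∂μ
      = ∫ ω, ‖F ω‖ ^ 2 ∂μ - 2 * ∫ ω, ⟪F ω, G ω⟫ ∂μ + ∫ ω, ‖G ω‖ ^ 2 ∂μ := by
  have hFG := (hF.integrable_inner hG).const_mul 2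
  simp_rw [norm_sub_sq_real]
  rw [integral_add ?_ hG.integrable_norm_sq, integral_sub hF.integrable_norm_sq hFG,
    integral_const_mul]
  exact hF.integrable_norm_sq.sub hFG

theorem integral_inner_eq_zero_of_condExp_eq_zero [CompleteSpace E] (hm : m ≤ mΩ)
    [SigmaFinite (μ.trim hm)] (hF : StronglyMeasurable[m] F)
    (hFG : Integrable (fun ω => ⟪F ω, G ω⟫) μ) (hG : Integrable G μ) (hG0 : μ[G|m] =ᵐ[μ] 0) :
    ∫ ω, ⟪F ω, G ω⟫ ∂μ = 0 := by
  rw [← integral_condExp hm]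
  calc ∫ ω, μ[fun ω => ⟪F ω, G ω⟫|m] ω ∂μ = ∫ ω, ⟪F ω, μ[G|m] ω⟫ ∂μ :=
        integral_congr_ae (condExp_bilin_of_stronglyMeasurable_left (innerSL ℝ) hF hFG hG)
    _ = 0 := by
        rw [integral_congr_ae (g := 0) (hG0.mono fun ω hω => by simp [hω])]
        simp

theorem integral_norm_sub_sq_eq_of_condExp_eq_zero [CompleteSpace E] (hm : m ≤ mΩ)
    [IsFiniteMeasure μ] (hFm : StronglyMeasurable[m] F) (hF : MemLp F 2 μ) (hG : MemLp G 2 μ)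
    (hG0 : μ[G|m] =ᵐ[μ] 0) :
    ∫ ω, ‖F ω - G ω‖ ^ 2 ∂μ = ∫ ω, ‖F ω‖ ^ 2 ∂μ + ∫ ω, ‖G ω‖ ^ 2 ∂μ := by
  rw [integral_norm_sub_sq hF hG, integral_inner_eq_zero_of_condExp_eq_zero hm hFm
    (hF.integrable_inner hG) (hG.integrable one_le_two) hG0]
  ring

theorem condExp_sub_ae_eq_zero [CompleteSpace E] (hm : m ≤ mΩ) [SigmaFinite (μ.trim hm)]
    (hF : Integrable F μ) (hGm : StronglyMeasurable[m] G) (hFG : μ[F|m] =ᵐ[μ] G) :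
    μ[F - G|m] =ᵐ[μ] 0 := by
  have hG : Integrable G μ := integrable_condExp.congr hFG
  filter_upwards [condExp_sub hF hG m, hFG] with ω hsub hω
  rw [hsub, Pi.sub_apply, hω, condExp_of_stronglyMeasurable hm hGm hG, sub_self, Pi.zero_apply]

theorem integral_inv_sq_mul_sum_sum_le {ι : Type*} [Fintype ι] [Nonempty ι]
    {F : ι → ι → Ω → ℝ} {c : ℝ}
    (hF : ∀ i j, Integrable (F i j) μ) (hc : ∀ i j, ∫ ω, F i j ω ∂μ ≤ c) :
    ∫ ω, ((Fintype.card ι : ℝ) ^ 2)⁻¹ * ∑ i, ∑ j, F i j ω ∂μ ≤ c := by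
  rw [integral_const_mul, integral_finsetSum _ fun i _ => integrable_finsetSum _ fun j _ => hF i j]
  simp_rw [integral_finsetSum _ fun j _ => hF _ j]
  have hcard : (0 : ℝ) < (Fintype.card ι : ℝ) ^ 2 := by positivity
  rw [inv_mul_le_iff₀ hcard]
  calc ∑ i, ∑ j, ∫ ω, F i j ω ∂μ ≤ ∑ _i : ι, ∑ _j : ι, c := by gcongr with i _ j _; exact hc i j
    _ = (Fintype.card ι : ℝ) ^ 2 * c := by
      simp only [Finset.sum_const, Finset.card_univ, nsmul_eq_mul]; ring

end MeasureTheory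

section SGD

variable {E : Type*} [NormedAddCommGroup E] [InnerProductSpace ℝ E]
  {Ω : Type*} {mΩ : MeasurableSpace Ω} {μ : Measure Ω} {f : E → ℝ} {L η σ : ℝ} {ι : Type*}
  {y g : ι → ℕ → Ω → E}

theorem memLp_sub_of_sgd (hrec : ∀ i h, y i (h + 1) = fun ω => y i h ω - η • g i h ω)
    (hg : ∀ i h, MemLp (g i h) 2 μ) {i j : ι} (h0 : MemLp (y i 0 - y j 0) 2 μ) (h : ℕ) :
    MemLp (y i h - y j h) 2 μ := by
  induction h with
  | zero => exact h0
  | succ h ih =>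
    rw [hrec i, hrec j]
    convert ih.sub ((hg i h).sub (hg j h) |>.const_smul η) using 1
    ext ω
    simp only [Pi.sub_apply, Pi.smul_apply]
    module

variable [CompleteSpace E]

theorem integral_norm_sq_sgd_step_sub_le [IsFiniteMeasure μ] {m : MeasurableSpace Ω}
    (hm : m ≤ mΩ) (hconv : ConvexOn ℝ Set.univ f) (hdiff : Differentiable ℝ f) (hL : 0 < L)
    (hlip : ∀ x y, ‖gradient f x - gradient f y‖ ≤ L * ‖x - y‖) (hη0 : 0 ≤ η) (hη : η ≤ 1 / L)
    {a b ga gb : Ω → E} (ha : StronglyMeasurable[m] a) (hb : StronglyMeasurable[m] b)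
    (hab : MemLp (a - b) 2 μ) (hga : MemLp ga 2 μ) (hgb : MemLp gb 2 μ)
    (hga_cond : μ[ga|m] =ᵐ[μ] fun ω => gradient f (a ω))
    (hgb_cond : μ[gb|m] =ᵐ[μ] fun ω => gradient f (b ω))
    (huncorr : ∫ ω, ⟪ga ω - gradient f (a ω), gb ω - gradient f (b ω)⟫ ∂μ = 0) :
    ∫ ω, ‖(a ω - η • ga ω) - (b ω - η • gb ω)‖ ^ 2 ∂μ
      ≤ ∫ ω, ‖a ω - b ω‖ ^ 2 ∂μ + η ^ 2 *
        (∫ ω, ‖ga ω - gradient f (a ω)‖ ^ 2 ∂μ + ∫ ω, ‖gb ω - gradient f (b ω)‖ ^ 2 ∂μ) := by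
  have hcont : Continuous (gradient f) :=
    (LipschitzWith.of_dist_le' fun x y => by simpa only [dist_eq_norm] using hlip x y).continuous
  set Ga : Ω → E := fun ω => gradient f (a ω)
  set Gb : Ω → E := fun ω => gradient f (b ω)
  have hGa : MemLp Ga 2 μ := (hga.condExp (m := m) one_le_two).ae_eq hga_cond
  have hGb : MemLp Gb 2 μ := (hgb.condExp (m := m) one_le_two).ae_eq hgb_cond
  have hGm : StronglyMeasurable[m] (Ga - Gb) :=
    (hcont.comp_stronglyMeasurable ha).sub (hcont.comp_stronglyMeasurable hb)
  set W : Ω → E := (a - b) - η • (Ga - Gb)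
  set Z : Ω → E := (ga - Ga) - (gb - Gb)
  have hZ0 : μ[η • Z|m] =ᵐ[μ] 0 := by
    have hcond : μ[ga - gb|m] =ᵐ[μ] Ga - Gb :=
      (condExp_sub (hga.integrable one_le_two) (hgb.integrable one_le_two) m).trans
        (hga_cond.sub hgb_cond)
    have := condExp_sub_ae_eq_zero hm ((hga.sub hgb).integrable one_le_two) hGm hcond
    rw [show Z = (ga - gb) - (Ga - Gb) by simp only [Z]; abel]
    filter_upwards [condExp_smul η ((ga - gb) - (Ga - Gb)) m, this] with ω h1 h2
    simp [h1, h2]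
  have hnoise : ∫ ω, ‖Z ω‖ ^ 2 ∂μ = ∫ ω, ‖ga ω - Ga ω‖ ^ 2 ∂μ + ∫ ω, ‖gb ω - Gb ω‖ ^ 2 ∂μ := by
    show ∫ ω, ‖(ga - Ga) ω - (gb - Gb) ω‖ ^ 2 ∂μ = _
    rw [integral_norm_sub_sq (hga.sub hGa) (hgb.sub hGb)]
    simp only [Ga, Gb, Pi.sub_apply, huncorr]
    ring
  have hdrift : ∫ ω, ‖W ω‖ ^ 2 ∂μ ≤ ∫ ω, ‖a ω - b ω‖ ^ 2 ∂μ := by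
    refine integral_mono (hab.sub ((hGa.sub hGb).const_smul η)).integrable_norm_sq
      hab.integrable_norm_sq fun ω => ?_
    have := hconv.norm_sub_smul_gradient_sub_le hdiff hL hlip hη0 hη (a ω) (b ω)
    simp only [W, Pi.sub_apply, Pi.smul_apply, Ga, Gb]
    rw [show a ω - b ω - η • (gradient f (a ω) - gradient f (b ω))
      = (a ω - η • gradient f (a ω)) - (b ω - η • gradient f (b ω)) by module]
    gcongr
  have hsplit : ∀ ω, (a ω - η • ga ω) - (b ω - η • gb ω) = W ω - (η • Z) ω := fun ω => by
    simp only [W, Z, Pi.sub_apply, Pi.smul_apply]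
    module
  calc ∫ ω, ‖(a ω - η • ga ω) - (b ω - η • gb ω)‖ ^ 2 ∂μ = ∫ ω, ‖W ω - (η • Z) ω‖ ^ 2 ∂μ := by
        simp_rw [hsplit]
    _ = ∫ ω, ‖W ω‖ ^ 2 ∂μ + η ^ 2 * ∫ ω, ‖Z ω‖ ^ 2 ∂μ := by
        rw [integral_norm_sub_sq_eq_of_condExp_eq_zero hm
          ((ha.sub hb).sub (hGm.const_smul η)) (hab.sub ((hGa.sub hGb).const_smul η))
          (((hga.sub hGa).sub (hgb.sub hGb)).const_smul η) hZ0, ← integral_const_mul]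
        simp only [Pi.smul_apply, norm_smul, mul_pow, Real.norm_eq_abs, sq_abs]
        rfl
    _ ≤ _ := by rw [hnoise]; gcongr

theorem integral_norm_sq_sgd_sub_le [IsFiniteMeasure μ] (ℱ : Filtration ℕ mΩ)
    (hconv : ConvexOn ℝ Set.univ f) (hdiff : Differentiable ℝ f) (hL : 0 < L)
    (hlip : ∀ x y, ‖gradient f x - gradient f y‖ ≤ L * ‖x - y‖) (hη0 : 0 ≤ η) (hη : η ≤ 1 / L)
    (hrec : ∀ i h, y i (h + 1) = fun ω => y i h ω - η • g i h ω)
    (hadapt : ∀ i h, StronglyMeasurable[ℱ h] (y i h))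
    (hg : ∀ i h, MemLp (g i h) 2 μ)
    (hunbiased : ∀ i h, μ[g i h | ℱ h] =ᵐ[μ] fun ω => gradient f (y i h ω))
    (hvar : ∀ i h, ∫ ω, ‖g i h ω - gradient f (y i h ω)‖ ^ 2 ∂μ ≤ σ ^ 2) {i j : ι}
    (huncorr : ∀ h,
      ∫ ω, ⟪g i h ω - gradient f (y i h ω), g j h ω - gradient f (y j h ω)⟫ ∂μ = 0)
    (h0 : MemLp (y i 0 - y j 0) 2 μ) (h : ℕ) :
    ∫ ω, ‖y i h ω - y j h ω‖ ^ 2 ∂μ ≤ ∫ ω, ‖y i 0 ω - y j 0 ω‖ ^ 2 ∂μ + 2 * η ^ 2 * σ ^ 2 * h := by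
  induction h with
  | zero => simp
  | succ h ih =>
    rw [hrec i, hrec j]
    calc _ ≤ ∫ ω, ‖y i h ω - y j h ω‖ ^ 2 ∂μ + η ^ 2 * (σ ^ 2 + σ ^ 2) := by
          grw [integral_norm_sq_sgd_step_sub_le (ℱ.le h) hconv hdiff hL hlip hη0 hη
            (hadapt i h) (hadapt j h) (memLp_sub_of_sgd hrec hg h0 h) (hg i h) (hg j h)
            (hunbiased i h) (hunbiased j h) (huncorr h), hvar i h, hvar j h]
      _ ≤ _ := by grw [ih]; push_cast; linarith

end SGD

theorem client_drift_bound_general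
    {d : ℕ} {Ω : Type} [mΩ : MeasurableSpace Ω] (μ : Measure Ω) [IsProbabilityMeasure μ]
    (f : EuclideanSpace ℝ (Fin d) → ℝ) (L σ η : ℝ) (M : ℕ) (hM : 0 < M)
    (hconv : ConvexOn ℝ Set.univ f) (hdiff : Differentiable ℝ f) (hL : 0 < L)
    (hlip : ∀ x y, ‖gradient f x - gradient f y‖ ≤ L * ‖x - y‖)
    (hη0 : 0 < η) (hη : η ≤ 1 / L)
    (X : Ω → EuclideanSpace ℝ (Fin d))
    (y g : Fin M → ℕ → Ω → EuclideanSpace ℝ (Fin d))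
    (ℱ : Filtration ℕ mΩ)
    (hy0 : ∀ m, y m 0 = X)
    (hyrec : ∀ m h, y m (h + 1) = fun ω => y m h ω - η • g m h ω)
    (hadapt : ∀ m h, StronglyMeasurable[ℱ h] (y m h))
    (hL2 : ∀ m h, MemLp (g m h) 2 μ)
    (hunbiased : ∀ m h, μ[g m h | ℱ h] =ᵐ[μ] fun ω => gradient f (y m h ω))
    (hvar : ∀ m h, ∫ ω, ‖g m h ω - gradient f (y m h ω)‖ ^ 2 ∂μ ≤ σ ^ 2)
    (hindep : ∀ m s h, m ≠ s →
      μ[(fun ω => ⟪g m h ω - gradient f (y m h ω),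
                   g s h ω - gradient f (y s h ω)⟫) | ℱ h] =ᵐ[μ] 0) :
    ∀ h : ℕ, ∫ ω, ((M : ℝ) ^ 2)⁻¹ * ∑ m, ∑ s, ‖y m h ω - y s h ω‖ ^ 2 ∂μ
      ≤ 2 * η ^ 2 * σ ^ 2 * h := by
  intro h
  have h0 : ∀ m s, MemLp (y m 0 - y s 0) 2 μ := fun m s => by simp [hy0]
  have hpair : ∀ m s, ∫ ω, ‖y m h ω - y s h ω‖ ^ 2 ∂μ ≤ 2 * η ^ 2 * σ ^ 2 * h := by
    intro m s
    rcases eq_or_ne m s with rfl | hms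
    · simp only [sub_self, norm_zero, zero_pow two_ne_zero, integral_zero]
      positivity
    have huncorr : ∀ h, ∫ ω, ⟪g m h ω - gradient f (y m h ω),
        g s h ω - gradient f (y s h ω)⟫ ∂μ = 0 := fun h => by
      rw [← integral_condExp (ℱ.le h), integral_congr_ae (hindep m s h hms)]
      simp
    simpa [hy0] using integral_norm_sq_sgd_sub_le ℱ hconv hdiff hL hlip hη0.le hη hyrec hadapt
      hL2 hunbiased hvar huncorr (h0 m s) h
  have : Nonempty (Fin M) := ⟨⟨0, hM⟩⟩
  simpa using integral_inv_sq_mul_sum_sum_le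
    (fun m s => (memLp_sub_of_sgd hyrec hL2 (h0 m s) h).integrable_norm_sq) hpair

/-- Client drift bound: if `M` nodes run SGD from the same (random) starting point with
stepsize `η ≤ 1/L` on a convex `L`-smooth `f`, with conditionally unbiased stochastic
gradients of variance at most `σ²`, independent across nodes, then for all `h`,
`E[(1/M²) Σ_{m,s} ‖y_{m,h} − y_{s,h}‖²] ≤ 2η²σ²h`. -/
theorem client_drift_bound
    {d : ℕ} {Ω : Type} [mΩ : MeasurableSpace Ω] (μ : Measure Ω) [IsProbabilityMeasure μ]
    (f : EuclideanSpace ℝ (Fin d) → ℝ) (L σ η : ℝ) (M : ℕ) (hM : 0 < M)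
    (hconv : ConvexOn ℝ Set.univ f) (hdiff : Differentiable ℝ f) (hL : 0 < L)
    (hlip : ∀ x y, ‖gradient f x - gradient f y‖ ≤ L * ‖x - y‖)
    (hσ : 0 ≤ σ) (hη0 : 0 < η) (hη : η ≤ 1 / L)
    (X : Ω → EuclideanSpace ℝ (Fin d))
    (y g : Fin M → ℕ → Ω → EuclideanSpace ℝ (Fin d))
    (ℱ : Filtration ℕ mΩ)
    (hy0 : ∀ m, y m 0 = X)
    (hyrec : ∀ m h, y m (h + 1) = fun ω => y m h ω - η • g m h ω)
    (hadapt : ∀ m h, StronglyMeasurable[ℱ h] (y m h))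
    (hgmeas : ∀ m h, StronglyMeasurable[ℱ (h + 1)] (g m h))
    (hL2 : ∀ m h, MemLp (g m h) 2 μ)
    (hunbiased : ∀ m h, μ[g m h | ℱ h] =ᵐ[μ] fun ω => gradient f (y m h ω))
    (hvar : ∀ m h, ∫ ω, ‖g m h ω - gradient f (y m h ω)‖ ^ 2 ∂μ ≤ σ ^ 2)
    (hindep : ∀ m s h, m ≠ s →
      μ[(fun ω => ⟪g m h ω - gradient f (y m h ω),
                   g s h ω - gradient f (y s h ω)⟫) | ℱ h] =ᵐ[μ] 0) :
    ∀ h : ℕ, ∫ ω, ((M : ℝ) ^ 2)⁻¹ * ∑ m, ∑ s, ‖y m h ω - y s h ω‖ ^ 2 ∂μ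
      ≤ 2 * η ^ 2 * σ ^ 2 * h :=
  client_drift_bound_general (mΩ := mΩ) μ f L σ η M hM hconv hdiff hL hlip hη0 hη X y g ℱ hy0 hyrec
    hadapt hL2 hunbiased hvar hindep
end

section
/- Let 0 ≤ μ < 1 and let A ∈ ℝ^{R×R} be the symmetric Toeplitz matrix with entries A_{rs} = μ^{|r−s|}. Then every eigenvalue of A is at most (1+μ)/(1−μ), and consequently for any matrix Γ ∈ ℝ^{d×R}, Tr(Γ A Γᵀ) ≤ ((1+μ)/(1−μ))·Tr(Γ Γᵀ). -/
/-!
The entries of `A` are nonnegative and every row and column of `A` is a sub-sum of the two-sided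
geometric series `∑_{k ∈ ℤ} μ^|k| = (1 + μ) / (1 - μ)`. By the Schur test
(`2 A_rs x_r x_s ≤ A_rs (x_r² + x_s²)`) the quadratic form of `A` is therefore bounded by
`(1 + μ) / (1 - μ)` times the squared norm; testing it on an eigenvector bounds the eigenvalues,
and summing it over the rows of `Γ` gives the trace inequality.
-/

open Finset Matrix

theorem hasSum_pow_natAbs {μ : ℝ} (hμ : |μ| < 1) :
    HasSum (fun k : ℤ => μ ^ k.natAbs) ((1 + μ) / (1 - μ)) := by
  have hμ1 : 1 - μ ≠ 0 := by linarith [le_abs_self μ]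
  have hpos := hasSum_geometric_of_abs_lt_one hμ
  convert hpos.int_rec (hpos.mul_left μ) using 1
  · funext k
    cases k <;> simp [pow_succ']
  · field_simp

theorem sum_pow_natAbs_le_of_injective {ι : Type*} [Fintype ι] {μ : ℝ} (hμ0 : 0 ≤ μ)
    (hμ1 : μ < 1) {g : ι → ℤ} (hg : Function.Injective g) :
    ∑ i, μ ^ (g i).natAbs ≤ (1 + μ) / (1 - μ) :=
  hasSum_le_inj g hg (fun _ _ => by positivity) (fun _ => le_rfl) (hasSum_fintype _)
    (hasSum_pow_natAbs (abs_lt.2 ⟨by linarith, hμ1⟩))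

theorem Matrix.dotProduct_mulVec_le_of_sum_le {n : Type*} [Fintype n] {A : Matrix n n ℝ}
    {c : ℝ} (hA : ∀ i j, 0 ≤ A i j) (hrow : ∀ i, ∑ j, A i j ≤ c) (hcol : ∀ j, ∑ i, A i j ≤ c)
    (x : n → ℝ) : x ⬝ᵥ A *ᵥ x ≤ c * (x ⬝ᵥ x) := by
  calc x ⬝ᵥ A *ᵥ x = ∑ i, ∑ j, A i j * x i * x j := by
        simp only [dotProduct, mulVec, mul_sum]
        exact sum_congr rfl fun i _ => sum_congr rfl fun j _ => by ring
    _ ≤ ∑ i, ∑ j, (x i ^ 2 / 2 * A i j + x j ^ 2 / 2 * A i j) := by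
        gcongr with i _ j _
        nlinarith [mul_nonneg (hA i j) (sq_nonneg (x i - x j))]
    _ = ∑ i, x i ^ 2 / 2 * ∑ j, A i j + ∑ j, x j ^ 2 / 2 * ∑ i, A i j := by
        simp only [sum_add_distrib, mul_sum]
        rw [sum_comm (f := fun i j => x j ^ 2 / 2 * A i j)]
    _ ≤ ∑ i, x i ^ 2 / 2 * c + ∑ j, x j ^ 2 / 2 * c := by
        gcongr with i _ j _
        exacts [hrow i, hcol j]
    _ = c * (x ⬝ᵥ x) := by
        simp only [dotProduct, mul_sum, ← sum_add_distrib]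
        exact sum_congr rfl fun i _ => by ring

theorem Matrix.le_of_hasEigenvalue_of_dotProduct_mulVec_le {n : Type*} [Fintype n]
    [DecidableEq n] {A : Matrix n n ℝ} {c t : ℝ} (hA : ∀ x, x ⬝ᵥ A *ᵥ x ≤ c * (x ⬝ᵥ x))
    (ht : Module.End.HasEigenvalue (toLin' A) t) : t ≤ c := by
  obtain ⟨v, hv⟩ := ht.exists_hasEigenvector
  have hAv : A *ᵥ v = t • v := by simpa using hv.apply_eq_smul
  have hvv : 0 < v ⬝ᵥ v := by simpa using dotProduct_star_self_pos_iff.2 hv.2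
  refine le_of_mul_le_mul_right ?_ hvv
  calc t * (v ⬝ᵥ v) = v ⬝ᵥ A *ᵥ v := by rw [hAv, dotProduct_smul, smul_eq_mul]
    _ ≤ c * (v ⬝ᵥ v) := hA v

theorem Matrix.trace_mul_mul_transpose_eq_sum {m n : Type*} [Fintype m] [Fintype n]
    (Γ : Matrix m n ℝ) (A : Matrix n n ℝ) :
    trace (Γ * A * Γᵀ) = ∑ i, Γ i ⬝ᵥ A *ᵥ Γ i := by
  simp only [trace, diag, mul_apply, transpose_apply, dotProduct, mulVec, sum_mul, mul_sum]
  refine sum_congr rfl fun i _ => ?_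
  rw [sum_comm]
  exact sum_congr rfl fun j _ => sum_congr rfl fun k _ => by ring

theorem Matrix.trace_mul_transpose_eq_sum {m n : Type*} [Fintype m] [Fintype n]
    (Γ : Matrix m n ℝ) : trace (Γ * Γᵀ) = ∑ i, Γ i ⬝ᵥ Γ i := by
  simp [trace, mul_apply, dotProduct]

theorem Matrix.trace_mul_mul_transpose_le {m n : Type*} [Fintype m] [Fintype n]
    {A : Matrix n n ℝ} {c : ℝ} (hA : ∀ x, x ⬝ᵥ A *ᵥ x ≤ c * (x ⬝ᵥ x)) (Γ : Matrix m n ℝ) :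
    trace (Γ * A * Γᵀ) ≤ c * trace (Γ * Γᵀ) := by
  rw [trace_mul_mul_transpose_eq_sum, trace_mul_transpose_eq_sum, mul_sum]
  exact sum_le_sum fun i _ => hA (Γ i)

/-- Spectral bound for the momentum Toeplitz matrix `A_{rs} = μ^{|r−s|}` with `0 ≤ μ < 1`:
every eigenvalue of `A` is at most `(1+μ)/(1−μ)`, and consequently
`Tr(Γ A Γᵀ) ≤ ((1+μ)/(1−μ)) Tr(Γ Γᵀ)` for every `Γ ∈ ℝ^{d×R}`. -/
theorem toeplitz_momentum_spectral_bound
    (R d : ℕ) (μ : ℝ) (hμ0 : 0 ≤ μ) (hμ1 : μ < 1)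
    (A : Matrix (Fin R) (Fin R) ℝ)
    (hA : ∀ r s : Fin R, A r s = μ ^ ((r : ℤ) - (s : ℤ)).natAbs) :
    (∀ t : ℝ, Module.End.HasEigenvalue (Matrix.toLin' A) t → t ≤ (1 + μ) / (1 - μ)) ∧
    ∀ Γ : Matrix (Fin d) (Fin R) ℝ,
      Matrix.trace (Γ * A * Γ.transpose)
        ≤ ((1 + μ) / (1 - μ)) * Matrix.trace (Γ * Γ.transpose) := by
  have hcast : Function.Injective fun r : Fin R => (r : ℤ) :=
    Nat.cast_injective.comp Fin.val_injective
  have hquad : ∀ x, x ⬝ᵥ A *ᵥ x ≤ (1 + μ) / (1 - μ) * (x ⬝ᵥ x) := by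
    refine dotProduct_mulVec_le_of_sum_le (fun r s => hA r s ▸ pow_nonneg hμ0 _)
      (fun r => ?_) (fun s => ?_)
    · simpa only [hA, Function.comp_apply] using
        sum_pow_natAbs_le_of_injective hμ0 hμ1 (sub_right_injective.comp hcast)
    · simpa only [hA, Function.comp_apply] using
        sum_pow_natAbs_le_of_injective hμ0 hμ1 (sub_left_injective.comp hcast)
  exact ⟨fun t ht => le_of_hasEigenvalue_of_dotProduct_mulVec_le hquad ht,
    trace_mul_mul_transpose_le hquad⟩
end

section
/- Let 0 < μ < 1, η, γ > 0, and let (G_r)_{r=0}^{R−1} be arbitrary vectors in ℝ^d. Define the momentum iteration x_{r+1} = x_r − ηγ G_r + μ(x_r − x_{r−1}) with x₀ = x_{−1}. Then x_r − x_{r−1} = −ηγ Σ_{s=0}^{r−1} μ^{r−1−s} G_s for all r ≥ 1, and Σ_{r=0}^{R−1} ⟨x_{r−1} − x_r, G_r⟩ ≤ (ηγ/(1−μ)) Σ_{r=0}^{R−1} ‖G_r‖². -/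
/-!
With `d r = x (r - 1) - x r`, the recursion reads `d (r + 1) = ηγ G r + μ d r` and `d 0 = 0`, which
unrolls to `d r = ηγ ∑_{s<r} μ^(r-1-s) G s`. The cross-term sum is then `ηγ ∑_{r,s} K r s ⟪G s, G r⟫`
for the strictly lower triangular Toeplitz kernel `K r s = μ^(r-1-s) [s < r]`. Its row and column sums
are partial geometric sums, at most `1/(1-μ)`, so the Schur test (`⟪u, v⟫ ≤ (‖u‖² + ‖v‖²)/2` termwise)
bounds the form by `1/(1-μ) ∑ ‖G r‖²`.
-/

open scoped RealInnerProductSpace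

open Finset

section Displacement

variable {k E : Type*} [CommRing k] [AddCommGroup E] [Module k E]

theorem sum_range_succ_pow_sub_smul (μ : k) (G : ℕ → E) (r : ℕ) :
    ∑ s ∈ range (r + 1), μ ^ (r - s) • G s
      = μ • ∑ s ∈ range r, μ ^ (r - 1 - s) • G s + G r := by
  rw [sum_range_succ, smul_sum, Nat.sub_self, pow_zero, one_smul]
  congr 1
  refine sum_congr rfl fun s hs => ?_
  have hsr := mem_range.mp hs
  rw [smul_smul, ← pow_succ']
  congr 2
  omega

theorem heavyBall_sub_eq_smul_sum {μ c : k} {G x : ℕ → E}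
    (hrec : ∀ r, x (r + 1) = x r - c • G r + μ • (x r - x (r - 1))) (r : ℕ) :
    x (r - 1) - x r = c • ∑ s ∈ range r, μ ^ (r - 1 - s) • G s := by
  induction r with
  | zero => simp
  | succ r ih =>
    rw [Nat.add_sub_cancel, sum_range_succ_pow_sub_smul, hrec, smul_add, smul_comm c μ, ← ih]
    module

end Displacement

/-- Schur test for the bilinear form `∑ K i j ⟪u j, u i⟫`. -/
theorem sum_sum_mul_inner_le_of_sum_le {ι E : Type*} [NormedAddCommGroup E]
    [InnerProductSpace ℝ E] (s : Finset ι) {K : ι → ι → ℝ} {B : ℝ}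
    (hK : ∀ i ∈ s, ∀ j ∈ s, 0 ≤ K i j) (hrow : ∀ i ∈ s, ∑ j ∈ s, K i j ≤ B)
    (hcol : ∀ j ∈ s, ∑ i ∈ s, K i j ≤ B) (u : ι → E) :
    ∑ i ∈ s, ∑ j ∈ s, K i j * ⟪u j, u i⟫ ≤ B * ∑ i ∈ s, ‖u i‖ ^ 2 := by
  have amgm : ∀ i ∈ s, ∀ j ∈ s,
      K i j * ⟪u j, u i⟫ ≤ K i j * ‖u i‖ ^ 2 / 2 + K i j * ‖u j‖ ^ 2 / 2 := by
    intro i hi j hj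
    have h2 : 2 * ⟪u j, u i⟫ ≤ ‖u i‖ ^ 2 + ‖u j‖ ^ 2 := by
      linarith [real_inner_le_norm (u j) (u i), two_mul_le_add_sq ‖u i‖ ‖u j‖]
    linarith [mul_le_mul_of_nonneg_left h2 (hK i hi j hj)]
  calc ∑ i ∈ s, ∑ j ∈ s, K i j * ⟪u j, u i⟫
      ≤ ∑ i ∈ s, ∑ j ∈ s, (K i j * ‖u i‖ ^ 2 / 2 + K i j * ‖u j‖ ^ 2 / 2) :=
        sum_le_sum fun i hi => sum_le_sum fun j hj => amgm i hi j hj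
    _ = (∑ i ∈ s, ‖u i‖ ^ 2 * ∑ j ∈ s, K i j) / 2
          + (∑ j ∈ s, ‖u j‖ ^ 2 * ∑ i ∈ s, K i j) / 2 := by
        simp only [sum_add_distrib]
        rw [sum_comm (f := fun i j => K i j * ‖u j‖ ^ 2 / 2)]
        simp only [mul_sum, sum_div]
        congr 1 <;> exact sum_congr rfl fun _ _ => sum_congr rfl fun _ _ => by ring
    _ ≤ (∑ i ∈ s, ‖u i‖ ^ 2 * B) / 2 + (∑ j ∈ s, ‖u j‖ ^ 2 * B) / 2 := by
        gcongr with i hi j hj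
        · exact hrow i hi
        · exact hcol j hj
    _ = B * ∑ i ∈ s, ‖u i‖ ^ 2 := by rw [← sum_mul]; ring

theorem geom_sum_le_inv_one_sub {K : Type*} [Field K] [LinearOrder K] [IsStrictOrderedRing K]
    {x : K} (hx : 0 ≤ x) (h'x : x < 1) (n : ℕ) : ∑ i ∈ range n, x ^ i ≤ (1 - x)⁻¹ := by
  have := geom_sum_Ico_le_of_lt_one (m := 0) (n := n) hx h'x
  rwa [pow_zero, one_div, ← range_eq_Ico] at this

section Kernel

def heavyBallKernel (μ : ℝ) (r s : ℕ) : ℝ := if s < r then μ ^ (r - 1 - s) else 0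

variable {μ : ℝ}

theorem sum_range_heavyBallKernel_mul {r R : ℕ} (hr : r ≤ R) (f : ℕ → ℝ) :
    ∑ s ∈ range R, heavyBallKernel μ r s * f s = ∑ s ∈ range r, μ ^ (r - 1 - s) * f s := by
  rw [← sum_range_add_sum_Ico _ hr, sum_eq_zero (s := Ico r R), add_zero]
  · exact sum_congr rfl fun s hs => by rw [heavyBallKernel, if_pos (mem_range.mp hs)]
  · intro s hs
    rw [heavyBallKernel, if_neg (by simp at hs; omega), zero_mul]

theorem heavyBallKernel_nonneg (hμ : 0 ≤ μ) (r s : ℕ) : 0 ≤ heavyBallKernel μ r s := by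
  unfold heavyBallKernel; split_ifs <;> positivity

theorem sum_heavyBallKernel_row_le (hμ0 : 0 ≤ μ) (hμ1 : μ < 1) {r R : ℕ} (hr : r ≤ R) :
    ∑ s ∈ range R, heavyBallKernel μ r s ≤ (1 - μ)⁻¹ := by
  have := sum_range_heavyBallKernel_mul (μ := μ) hr fun _ => 1
  simp only [mul_one] at this
  rw [this, sum_range_reflect (fun i => μ ^ i) r]
  exact geom_sum_le_inv_one_sub hμ0 hμ1 r

theorem sum_heavyBallKernel_col_le (hμ0 : 0 ≤ μ) (hμ1 : μ < 1) (s R : ℕ) :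
    ∑ r ∈ range R, heavyBallKernel μ r s ≤ (1 - μ)⁻¹ :=
  calc ∑ r ∈ range R, heavyBallKernel μ r s
      ≤ ∑ r ∈ range (s + 1 + R), heavyBallKernel μ r s :=
        sum_le_sum_of_subset_of_nonneg (range_subset_range.mpr (by omega))
          fun r _ _ => heavyBallKernel_nonneg hμ0 r s
    _ = ∑ i ∈ range R, μ ^ i := by
        have hlow : ∑ r ∈ range (s + 1), heavyBallKernel μ r s = 0 :=
          sum_eq_zero fun r hr => by rw [heavyBallKernel, if_neg (by simp at hr; omega)]
        rw [sum_range_add, hlow, zero_add]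
        exact sum_congr rfl fun i _ => by rw [heavyBallKernel, if_pos (by omega)]; congr 1; omega
    _ ≤ (1 - μ)⁻¹ := geom_sum_le_inv_one_sub hμ0 hμ1 R

end Kernel

/-- Heavy-ball displacement formula and cumulative momentum cross-term bound:
for `x_{r+1} = x_r − ηγ G_r + μ(x_r − x_{r−1})` with `x₀ = x_{−1}` (encoded via truncated
subtraction on `ℕ`), we have `x_r − x_{r−1} = −ηγ Σ_{s<r} μ^{r−1−s} G_s` and
`Σ_{r<R} ⟨x_{r−1} − x_r, G_r⟩ ≤ (ηγ/(1−μ)) Σ_{r<R} ‖G_r‖²`. -/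
theorem momentum_displacement_bound
    {d : ℕ} (μ η γ : ℝ) (hμ0 : 0 < μ) (hμ1 : μ < 1) (hη : 0 < η) (hγ : 0 < γ)
    (R : ℕ)
    (G x : ℕ → EuclideanSpace ℝ (Fin d))
    (hrec : ∀ r : ℕ, x (r + 1) = x r - (η * γ) • G r + μ • (x r - x (r - 1))) :
    (∀ r : ℕ, 1 ≤ r →
      x r - x (r - 1) = (-(η * γ)) • ∑ s ∈ Finset.range r, μ ^ (r - 1 - s) • G s) ∧
    ∑ r ∈ Finset.range R, ⟪x (r - 1) - x r, G r⟫
      ≤ (η * γ / (1 - μ)) * ∑ r ∈ Finset.range R, ‖G r‖ ^ 2 := by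
  have hdisp := heavyBall_sub_eq_smul_sum hrec
  refine ⟨fun r _ => by rw [← neg_sub, hdisp, neg_smul], ?_⟩
  have hcross : ∀ r ∈ range R, ⟪x (r - 1) - x r, G r⟫
      = η * γ * ∑ s ∈ range R, heavyBallKernel μ r s * ⟪G s, G r⟫ := fun r hr => by
    simp only [hdisp, real_inner_smul_left, sum_inner,
      sum_range_heavyBallKernel_mul (mem_range.mp hr).le]
  calc ∑ r ∈ range R, ⟪x (r - 1) - x r, G r⟫
      = η * γ * ∑ r ∈ range R, ∑ s ∈ range R, heavyBallKernel μ r s * ⟪G s, G r⟫ := by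
        rw [mul_sum]; exact sum_congr rfl hcross
    _ ≤ η * γ * ((1 - μ)⁻¹ * ∑ r ∈ range R, ‖G r‖ ^ 2) := by
        gcongr
        exact sum_sum_mul_inner_le_of_sum_le _
          (fun r _ s _ => heavyBallKernel_nonneg hμ0.le r s)
          (fun r hr => sum_heavyBallKernel_row_le hμ0.le hμ1 (mem_range.mp hr).le)
          (fun s _ => sum_heavyBallKernel_col_le hμ0.le hμ1 s R) G
    _ = η * γ / (1 - μ) * ∑ r ∈ range R, ‖G r‖ ^ 2 := by ring
end
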